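/- If (U, V) is a centered jointly Gaussian pair of real random variables, then Var(UV) = E[U²]·E[V²] + (E[UV])². -/

import Mathlib

/-!
By polarization, `UV = ((U + V)² - (U - V)²) / 4` and
`(UV)² = ((U + V)⁴ + (U - V)⁴ - 2 U⁴ - 2 V⁴) / 12`, so `E[(UV)²]` is determined by the second and
fourth moments of linear combinations of `U` and `V`. These are centered Gaussians, and a centered
Gaussian `X` satisfies `E[X⁴] = 3 E[X²]²`; substituting gives `E[(UV)²] = E[U²] E[V²] + 2 E[UV]²`.
-/

open MeasureTheory ProbabilityTheory Real Filter
open scoped NNReal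

section GaussianIntegral

variable {b : ℝ}

lemma integrable_pow_mul_exp_neg_mul_sq (hb : 0 < b) (n : ℕ) :
    Integrable fun x : ℝ => x ^ n * exp (-b * x ^ 2) := by
  simpa [rpow_natCast] using
    integrable_rpow_mul_exp_neg_mul_sq hb (s := n) (by linarith [n.cast_nonneg (α := ℝ)])

lemma tendsto_pow_mul_exp_neg_mul_sq_atTop (hb : 0 < b) (n : ℕ) :
    Tendsto (fun x : ℝ => x ^ n * exp (-b * x ^ 2)) atTop (nhds 0) := by
  have hexp : Tendsto (fun x : ℝ => exp (-(1 / 2) * x)) atTop (nhds 0) :=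
    tendsto_exp_atBot.comp (tendsto_id.const_mul_atTop_of_neg (by norm_num))
  simpa [rpow_natCast] using (rpow_mul_exp_neg_mul_sq_isLittleO_exp_neg hb n).trans_tendsto hexp

lemma tendsto_pow_mul_exp_neg_mul_sq_atBot (hb : 0 < b) (n : ℕ) :
    Tendsto (fun x : ℝ => x ^ n * exp (-b * x ^ 2)) atBot (nhds 0) := by
  have h := ((tendsto_pow_mul_exp_neg_mul_sq_atTop hb n).const_mul ((-1 : ℝ) ^ n)).comp
    tendsto_neg_atBot_atTop
  simp only [mul_zero] at h
  refine h.congr fun x => ?_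
  simp only [Function.comp_apply, neg_sq, ← mul_assoc, ← mul_pow]
  simp

lemma integral_pow_add_two_mul_exp_neg_mul_sq (hb : 0 < b) (n : ℕ) :
    ∫ x : ℝ, x ^ (n + 2) * exp (-b * x ^ 2)
      = (n + 1) / (2 * b) * ∫ x : ℝ, x ^ n * exp (-b * x ^ 2) := by
  have hderiv (x : ℝ) : HasDerivAt (fun x : ℝ => x ^ (n + 1) * exp (-b * x ^ 2))
      ((n + 1) * (x ^ n * exp (-b * x ^ 2)) - 2 * b * (x ^ (n + 2) * exp (-b * x ^ 2))) x := by
    have hpow : HasDerivAt (fun x : ℝ => x ^ (n + 1)) ((n + 1) * x ^ n) x := by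
      simpa using hasDerivAt_pow (n + 1) x
    have hexp := ((hasDerivAt_pow 2 x).const_mul (-b)).exp
    refine (hpow.fun_mul hexp).congr_deriv ?_
    ring
  have hint_n := integrable_pow_mul_exp_neg_mul_sq hb n
  have hint_n2 := integrable_pow_mul_exp_neg_mul_sq hb (n + 2)
  have hparts := integral_of_hasDerivAt_of_tendsto hderiv
    ((hint_n.const_mul _).sub (hint_n2.const_mul _))
    (tendsto_pow_mul_exp_neg_mul_sq_atBot hb (n + 1))
    (tendsto_pow_mul_exp_neg_mul_sq_atTop hb (n + 1))
  rw [integral_sub (hint_n.const_mul _) (hint_n2.const_mul _), integral_const_mul,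
    integral_const_mul, sub_zero, sub_eq_zero] at hparts
  rw [div_mul_eq_mul_div, eq_div_iff (by positivity)]
  linarith

end GaussianIntegral

section GaussianReal

lemma integral_pow_gaussianReal {v : ℝ≥0} (hv : v ≠ 0) (n : ℕ) :
    ∫ x, x ^ n ∂gaussianReal 0 v
      = (√(2 * π * v))⁻¹ * ∫ x : ℝ, x ^ n * exp (-(2 * v : ℝ)⁻¹ * x ^ 2) := by
  rw [integral_gaussianReal_eq_integral_smul hv, ← integral_const_mul]
  congr 1 with x
  simp only [gaussianPDFReal_def, smul_eq_mul, sub_zero, div_eq_inv_mul, neg_mul, mul_neg]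
  ring

/-- Stein's recursion: Gaussian integration by parts. -/
lemma integral_pow_add_two_gaussianReal (v : ℝ≥0) (n : ℕ) :
    ∫ x, x ^ (n + 2) ∂gaussianReal 0 v = (n + 1) * v * ∫ x, x ^ n ∂gaussianReal 0 v := by
  rcases eq_or_ne v 0 with rfl | hv
  · simp
  have hb : (0 : ℝ) < (2 * v : ℝ)⁻¹ := by have := pos_iff_ne_zero.mpr hv; positivity
  rw [integral_pow_gaussianReal hv, integral_pow_gaussianReal hv,
    integral_pow_add_two_mul_exp_neg_mul_sq hb]
  field_simp

lemma integral_sq_gaussianReal (v : ℝ≥0) : ∫ x, x ^ 2 ∂gaussianReal 0 v = v := by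
  simpa using integral_pow_add_two_gaussianReal v 0

lemma integral_pow_four_gaussianReal (v : ℝ≥0) :
    ∫ x, x ^ 4 ∂gaussianReal 0 v = 3 * v ^ 2 := by
  rw [integral_pow_add_two_gaussianReal v 2, integral_sq_gaussianReal]
  push_cast
  ring

lemma integrable_pow_gaussianReal (μ : ℝ) (v : ℝ≥0) (n : ℕ) :
    Integrable (fun x : ℝ => x ^ n) (gaussianReal μ v) :=
  integrable_pow_of_mem_interior_integrableExpSet (by simp) n

variable {Ω : Type*} [MeasurableSpace Ω] {P : Measure Ω} {X : Ω → ℝ} {μ : ℝ} {v : ℝ≥0}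

lemma aemeasurable_of_map_eq_gaussianReal (h : P.map X = gaussianReal μ v) : AEMeasurable X P :=
  .of_map_ne_zero (by rw [h]; exact IsProbabilityMeasure.ne_zero _)

lemma integrable_pow_of_map_eq_gaussianReal (h : P.map X = gaussianReal μ v) (n : ℕ) :
    Integrable (fun ω => X ω ^ n) P := by
  have hpow := integrable_pow_gaussianReal μ v n
  rw [← h] at hpow
  exact (integrable_map_measure (measurable_id.pow_const n).aestronglyMeasurable
    (aemeasurable_of_map_eq_gaussianReal h)).1 hpow

lemma integral_pow_of_map_eq_gaussianReal (h : P.map X = gaussianReal μ v) (n : ℕ) :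
    ∫ ω, X ω ^ n ∂P = ∫ x, x ^ n ∂gaussianReal μ v := by
  rw [← h, integral_map (aemeasurable_of_map_eq_gaussianReal h) (by fun_prop)]

lemma integral_pow_four_of_map_eq_gaussianReal (h : P.map X = gaussianReal 0 v) :
    ∫ ω, X ω ^ 4 ∂P = 3 * (∫ ω, X ω ^ 2 ∂P) ^ 2 := by
  rw [integral_pow_of_map_eq_gaussianReal h, integral_pow_of_map_eq_gaussianReal h,
    integral_pow_four_gaussianReal, integral_sq_gaussianReal]

end GaussianReal

section Polarization

variable {Ω : Type*} [MeasurableSpace Ω] {P : Measure Ω} {U V : Ω → ℝ}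

lemma memLp_two_mul_of_integrable_pow
    (hint : ∀ a b : ℝ, ∀ n : ℕ, Integrable (fun ω => (a * U ω + b * V ω) ^ n) P) :
    MemLp (fun ω => U ω * V ω) 2 P := by
  have hmul : Integrable (fun ω => U ω * V ω) P :=
    (((hint 1 1 2).sub (hint 1 (-1) 2)).div_const 4).congr <|
      ae_of_all _ fun ω => by simp only [Pi.sub_apply]; ring
  have hmul_sq : Integrable (fun ω => (U ω * V ω) ^ 2) P :=
    (((((hint 1 1 4).add (hint 1 (-1) 4)).sub ((hint 1 0 4).const_mul 2)).sub
      ((hint 0 1 4).const_mul 2)).div_const 12).congr <|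
      ae_of_all _ fun ω => by simp only [Pi.add_apply, Pi.sub_apply]; ring
  exact (memLp_two_iff_integrable_sq hmul.aestronglyMeasurable).2 hmul_sq

/-- By polarization, `U V` and `(U V) ^ 2` are linear combinations of the powers of `U + V`,
`U - V`, `U` and `V`. -/
lemma integral_mul_sq_of_integral_pow_four
    (hint : ∀ a b : ℝ, ∀ n : ℕ, Integrable (fun ω => (a * U ω + b * V ω) ^ n) P)
    (hmoment : ∀ a b : ℝ,
      ∫ ω, (a * U ω + b * V ω) ^ 4 ∂P = 3 * (∫ ω, (a * U ω + b * V ω) ^ 2 ∂P) ^ 2) :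
    ∫ ω, (U ω * V ω) ^ 2 ∂P
      = (∫ ω, U ω ^ 2 ∂P) * (∫ ω, V ω ^ 2 ∂P) + 2 * (∫ ω, U ω * V ω ∂P) ^ 2 := by
  set m : ℝ → ℝ → ℕ → ℝ := fun a b n => ∫ ω, (a * U ω + b * V ω) ^ n ∂P with hm
  have hU : ∫ ω, U ω ^ 2 ∂P = m 1 0 2 := by simp [hm]
  have hV : ∫ ω, V ω ^ 2 ∂P = m 0 1 2 := by simp [hm]
  have hUV : ∫ ω, U ω * V ω ∂P = (m 1 1 2 - m 1 (-1) 2) / 4 := by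
    rw [hm, ← integral_sub (hint 1 1 2) (hint 1 (-1) 2), ← integral_div]
    congr 1 with ω
    ring
  have hpar : m 1 1 2 + m 1 (-1) 2 = 2 * m 1 0 2 + 2 * m 0 1 2 := by
    rw [hm, ← integral_add (hint 1 1 2) (hint 1 (-1) 2), ← integral_const_mul, ← integral_const_mul,
      ← integral_add ((hint 1 0 2).const_mul 2) ((hint 0 1 2).const_mul 2)]
    congr 1 with ω
    ring
  have hUV2 : ∫ ω, (U ω * V ω) ^ 2 ∂P
      = (m 1 1 4 + m 1 (-1) 4 - 2 * m 1 0 4 - 2 * m 0 1 4) / 12 := by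
    have h : ∀ a b, Integrable (fun ω => (a * U ω + b * V ω) ^ 4) P := fun a b => hint a b 4
    rw [hm, ← integral_const_mul, ← integral_const_mul, ← integral_add (h 1 1) (h 1 (-1)),
      ← integral_sub (by fun_prop) (by fun_prop), ← integral_sub (by fun_prop) (by fun_prop),
      ← integral_div]
    congr 1 with ω
    ring
  have hm4 (a b : ℝ) : m a b 4 = 3 * m a b 2 ^ 2 := hmoment a b
  rw [hUV2, hU, hV, hUV, hm4, hm4, hm4, hm4]
  linear_combination (m 1 1 2 + m 1 (-1) 2 + 2 * m 1 0 2 + 2 * m 0 1 2) / 8 * hpar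

end Polarization

theorem stmt_3_general {Ω : Type*} [MeasurableSpace Ω] (P : Measure Ω) [IsProbabilityMeasure P]
    (U V : Ω → ℝ)
    (hGauss : ∀ a b : ℝ, ∃ v : ℝ≥0,
      Measure.map (fun ω => a * U ω + b * V ω) P = gaussianReal 0 v) :
    variance (fun ω => U ω * V ω) P =
      (∫ ω, U ω ^ 2 ∂P) * (∫ ω, V ω ^ 2 ∂P) + (∫ ω, U ω * V ω ∂P) ^ 2 := by
  have hint (a b : ℝ) (n : ℕ) : Integrable (fun ω => (a * U ω + b * V ω) ^ n) P :=
    (hGauss a b).elim fun _ h => integrable_pow_of_map_eq_gaussianReal h n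
  have hmoment (a b : ℝ) :
      ∫ ω, (a * U ω + b * V ω) ^ 4 ∂P = 3 * (∫ ω, (a * U ω + b * V ω) ^ 2 ∂P) ^ 2 :=
    (hGauss a b).elim fun _ h => integral_pow_four_of_map_eq_gaussianReal h
  rw [variance_eq_sub (memLp_two_mul_of_integrable_pow hint)]
  simp only [Pi.pow_apply]
  rw [integral_mul_sq_of_integral_pow_four hint hmoment]
  ring

/-- Isserlis' formula: if `(U, V)` is a centered jointly Gaussian pair of real random
variables (i.e., every linear combination `a U + b V` is a centered Gaussian), then
`Var(UV) = E[U²] E[V²] + (E[UV])²`. -/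
theorem stmt_3 {Ω : Type*} [MeasurableSpace Ω] (P : Measure Ω) [IsProbabilityMeasure P]
    (U V : Ω → ℝ) (hU : Measurable U) (hV : Measurable V)
    (hGauss : ∀ a b : ℝ, ∃ v : ℝ≥0,
      Measure.map (fun ω => a * U ω + b * V ω) P = gaussianReal 0 v) :
    variance (fun ω => U ω * V ω) P =
      (∫ ω, U ω ^ 2 ∂P) * (∫ ω, V ω ^ 2 ∂P) + (∫ ω, U ω * V ω ∂P) ^ 2 :=
  stmt_3_general P U V hGauss
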